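/- Suppose f is irreducible in ℤ[u^{±1}], noncyclotomic, and hyperbolic. Let ‖f‖₁ = Σ_k |f_k| and V = {v ∈ ℓ^∞(ℤ,ℤ) : ‖v‖_∞ ≤ ‖f‖₁}. Then ξ(V) = X_f, i.e. every point of X_f is of the form Σ_{n∈ℤ} v_n α_f^{−n}(x^Δ) for some integer sequence v with |v_n| ≤ ‖f‖₁ for all n. -/

import Mathlib

open Filter Topology Polynomial

noncomputable section

/-- The circle `ℝ/ℤ`. -/
abbrev Torus := AddCircle (1 : ℝ)

/-- `f(σ)` acting on `𝕋^ℤ`. -/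
def fsT (f : Polynomial ℤ) (x : ℤ → Torus) : ℤ → Torus :=
  fun n => ∑ k ∈ Finset.range (f.natDegree + 1), f.coeff k • x (n + (k : ℤ))

/-- `X_f = ker f(σ) ⊆ 𝕋^ℤ`. -/
def Xf (f : Polynomial ℤ) : Set (ℤ → Torus) := {x | ∀ n, fsT f x n = 0}

/-- `f(σ̄)` on real sequences. -/
def fsR (f : Polynomial ℤ) (w : ℤ → ℝ) : ℤ → ℝ :=
  fun n => ∑ k ∈ Finset.range (f.natDegree + 1), (f.coeff k : ℝ) * w (n + (k : ℤ))

/-- Bounded real sequences. -/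
def Bdd (w : ℤ → ℝ) : Prop := ∃ B : ℝ, ∀ n, |w n| ≤ B

/-- The sequence `v^Δ`. -/
def vDelta : ℤ → ℝ := fun n => if n = 0 then 1 else 0

/-- Coordinatewise reduction mod 1. -/
def rhoT (w : ℤ → ℝ) : ℤ → Torus := fun n => (w n : Torus)

/-- `f` is noncyclotomic. -/
def Noncyclotomic (f : Polynomial ℤ) : Prop :=
  ∀ θ : ℂ, Polynomial.aeval θ f = 0 → ∀ n : ℕ, 0 < n → θ ^ n ≠ 1

/-- `w^Δ`. -/
def IsWdelta (f : Polynomial ℤ) (w : ℤ → ℝ) : Prop :=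
  Bdd w ∧ fsR f w = vDelta ∧ Tendsto w cofinite (nhds 0)

/-- `ξ̄(v)_k = ∑_{n∈ℤ} v_n w^Δ_{k-n}`. -/
def xiBar (wd : ℤ → ℝ) (v : ℤ → ℤ) : ℤ → ℝ :=
  fun k => ∑' n : ℤ, (v n : ℝ) * wd (k - n)

/-- `‖f‖₁ = ∑_k |f_k|`. -/
def norm1 (f : Polynomial ℤ) : ℤ :=
  ∑ k ∈ Finset.range (f.natDegree + 1), |f.coeff k|

/-!
Over `ℂ`, `f(σ̄) = lc(f) ∏ (σ̄ - λ)` with `λ` running over the roots of `f`, none of modulus one.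
Each factor `σ̄ - λ` is injective on bounded sequences and maps exponentially decaying sequences
onto exponentially decaying ones (invert it by a geometric series in `λ` or `λ⁻¹`). Hence `w^Δ`
decays exponentially and `f(σ̄)` is injective on `ℓ^∞(ℤ,ℝ)`.

Exponential decay makes `ξ̄(v)` converge, with `f(σ̄) ξ̄(v) = v ∈ ℓ^∞(ℤ,ℤ)`, so `ρ(ξ̄(v)) ∈ X_f`.
Conversely, lift `x ∈ X_f` to `w` with values in `[0,1)`: then `v = f(σ̄) w` is integer valued with
`|v_n| ≤ ‖f‖₁`, and `ξ̄(v) - w` is a bounded sequence killed by `f(σ̄)`, hence zero.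
-/

section SeqShift

variable {𝕜 : Type*} [NormedField 𝕜]

def seqShift : Module.End 𝕜 (ℤ → 𝕜) where
  toFun w n := w (n + 1)
  map_add' _ _ := rfl
  map_smul' _ _ := rfl

@[simp]
lemma seqShift_apply (w : ℤ → 𝕜) (n : ℤ) : seqShift w n = w (n + 1) := rfl

lemma seqShift_pow_apply (k : ℕ) (w : ℤ → 𝕜) (n : ℤ) : (seqShift ^ k) w n = w (n + k) := by
  induction k generalizing n with
  | zero => simp
  | succ k ih => rw [pow_succ', Module.End.mul_apply, seqShift_apply, ih]; push_cast; ring_nf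

lemma aeval_seqShift_apply (p : 𝕜[X]) (w : ℤ → 𝕜) (n : ℤ) :
    aeval seqShift p w n = ∑ k ∈ Finset.range (p.natDegree + 1), p.coeff k * w (n + k) := by
  simp [aeval_eq_sum_range, seqShift_pow_apply]

lemma aeval_seqShift_X_sub_C_apply (l : 𝕜) (w : ℤ → 𝕜) (n : ℤ) :
    aeval seqShift (X - C l) w n = w (n + 1) - l * w n := by
  simp [Module.algebraMap_end_apply]

lemma bounded_aeval_seqShift (p : 𝕜[X]) {w : ℤ → 𝕜} (hw : ∃ B, ∀ n, ‖w n‖ ≤ B) :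
    ∃ B, ∀ n, ‖aeval seqShift p w n‖ ≤ B := by
  obtain ⟨B, hB⟩ := hw
  refine ⟨∑ k ∈ Finset.range (p.natDegree + 1), ‖p.coeff k‖ * B, fun n => ?_⟩
  rw [aeval_seqShift_apply]
  refine (norm_sum_le _ _).trans (Finset.sum_le_sum fun k _ => ?_)
  rw [norm_mul]
  exact mul_le_mul_of_nonneg_left (hB _) (norm_nonneg _)

def ExpDecay (w : ℤ → 𝕜) : Prop :=
  ∃ C r : ℝ, 0 ≤ C ∧ 0 < r ∧ r < 1 ∧ ∀ n, ‖w n‖ ≤ C * r ^ n.natAbs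

namespace ExpDecay

variable {w : ℤ → 𝕜}

lemma bounded (hw : ExpDecay w) : ∃ B, ∀ n, ‖w n‖ ≤ B := by
  obtain ⟨C, r, hC, hr0, hr1, hw⟩ := hw
  exact ⟨C, fun n => (hw n).trans (mul_le_of_le_one_right hC (pow_le_one₀ hr0.le hr1.le))⟩

lemma summable_norm (hw : ExpDecay w) : Summable fun n => ‖w n‖ := by
  obtain ⟨C, r, -, hr0, hr1, hw⟩ := hw
  have hgeom : Summable fun n : ℕ => C * r ^ n :=
    (summable_geometric_of_lt_one hr0.le hr1).mul_left C
  refine Summable.of_nonneg_of_le (fun n => norm_nonneg _) hw (.of_nat_of_neg ?_ ?_) <;>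
    simpa using hgeom

lemma const_smul (hw : ExpDecay w) (c : 𝕜) : ExpDecay (c • w) := by
  obtain ⟨C, r, hC, hr0, hr1, hw⟩ := hw
  refine ⟨‖c‖ * C, r, by positivity, hr0, hr1, fun n => ?_⟩
  rw [Pi.smul_apply, norm_smul, mul_assoc]
  exact mul_le_mul_of_nonneg_left (hw n) (norm_nonneg c)

lemma comp_neg (hw : ExpDecay w) : ExpDecay fun n => w (-n) := by
  obtain ⟨C, r, hC, hr0, hr1, hw⟩ := hw
  exact ⟨C, r, hC, hr0, hr1, fun n => by simpa using hw (-n)⟩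

lemma comp_add_const (hw : ExpDecay w) (c : ℤ) : ExpDecay fun n => w (n + c) := by
  obtain ⟨C, r, hC, hr0, hr1, hw⟩ := hw
  refine ⟨C / r ^ c.natAbs, r, by positivity, hr0, hr1, fun n => (hw _).trans ?_⟩
  rw [div_mul_eq_mul_div, le_div_iff₀ (by positivity), mul_assoc, ← pow_add]
  exact mul_le_mul_of_nonneg_left (pow_le_pow_of_le_one hr0.le hr1.le (by omega)) hC

end ExpDecay

lemma expDecay_ofReal_iff {w : ℤ → ℝ} : ExpDecay (fun n => (w n : ℂ)) ↔ ExpDecay w := by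
  simp [ExpDecay, Complex.norm_real]

lemma eq_zero_of_bounded_of_shift_eq_mul_of_norm_lt_one {l : 𝕜} (hl : ‖l‖ < 1) {h : ℤ → 𝕜}
    (hb : ∃ B, ∀ n, ‖h n‖ ≤ B) (he : ∀ n, h (n + 1) = l * h n) : h = 0 := by
  obtain ⟨B, hB⟩ := hb
  have hiter : ∀ (k : ℕ) (n : ℤ), h (n + k) = l ^ k * h n := by
    intro k n
    induction k with
    | zero => simp
    | succ k ih => rw [Nat.cast_succ, ← add_assoc, he, ih, pow_succ, mul_assoc, mul_left_comm]
  funext n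
  have hle : ∀ k : ℕ, ‖h n‖ ≤ B * ‖l‖ ^ k := fun k => by
    rw [← sub_add_cancel n k, hiter, norm_mul, norm_pow, mul_comm]
    exact mul_le_mul_of_nonneg_right (hB _) (by positivity)
  have hlim := (tendsto_pow_atTop_nhds_zero_of_lt_one (norm_nonneg l) hl).const_mul B
  rw [mul_zero] at hlim
  exact norm_le_zero_iff.1 (ge_of_tendsto' hlim hle)

lemma eq_zero_of_bounded_of_shift_eq_mul {l : 𝕜} (hl : ‖l‖ ≠ 1) {h : ℤ → 𝕜}
    (hb : ∃ B, ∀ n, ‖h n‖ ≤ B) (he : ∀ n, h (n + 1) = l * h n) : h = 0 := by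
  rcases hl.lt_or_gt with hlt | hgt
  · exact eq_zero_of_bounded_of_shift_eq_mul_of_norm_lt_one hlt hb he
  have hl0 : l ≠ 0 := norm_pos_iff.1 (one_pos.trans hgt)
  -- time reversal `n ↦ -n` turns `l` into `l⁻¹`
  have hrev : (fun n => h (-n)) = 0 := by
    refine eq_zero_of_bounded_of_shift_eq_mul_of_norm_lt_one (l := l⁻¹)
      (by rw [norm_inv]; exact inv_lt_one_of_one_lt₀ hgt) ?_ fun n => ?_
    · obtain ⟨B, hB⟩ := hb
      exact ⟨B, fun n => hB _⟩
    · rw [show -n = -(n + 1) + 1 by ring, he, inv_mul_cancel_left₀ hl0]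
  funext n
  simpa using congrFun hrev (-n)

lemma exists_pow_mul_pow_natAbs_le {q r : ℝ} (hq0 : 0 ≤ q) (hq1 : q < 1) (hr0 : 0 < r)
    (hr1 : r < 1) : ∃ ρ : ℝ, 0 < ρ ∧ ρ < 1 ∧ ∀ (j : ℕ) (n : ℤ),
      q ^ j * r ^ (n - 1 - j).natAbs ≤ ρ ^ n.natAbs / ρ * ρ ^ j := by
  set s := max q r
  have hs0 : 0 < s := hr0.trans_le (le_max_right _ _)
  refine ⟨√s, Real.sqrt_pos.2 hs0, (Real.sqrt_lt' one_pos).2 (by simp [s, hq1, hr1]),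
    fun j n => ?_⟩
  have hρ0 : 0 < √s := Real.sqrt_pos.2 hs0
  have hρ1 : √s ≤ 1 := Real.sqrt_le_one.2 (max_le hq1.le hr1.le)
  -- `j + |n - 1 - j| ≥ |n| - 1`, and the surplus `j` pays for the factor `√s ^ j`
  calc q ^ j * r ^ (n - 1 - j).natAbs
      ≤ s ^ j * s ^ (n - 1 - j).natAbs := by
        gcongr
        exacts [le_max_left _ _, le_max_right _ _]
    _ = √s ^ (2 * j + 2 * (n - 1 - j).natAbs + 1) / √s := by
        rw [pow_succ, mul_div_cancel_right₀ _ hρ0.ne', pow_add, pow_mul, pow_mul,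
          Real.sq_sqrt hs0.le]
    _ ≤ √s ^ (n.natAbs + j) / √s := by
        exact div_le_div_of_nonneg_right (pow_le_pow_of_le_one hρ0.le hρ1 (by omega)) hρ0.le
    _ = √s ^ n.natAbs / √s * √s ^ j := by ring

lemma exists_expDecay_shift_sub_mul_eq_of_norm_lt_one [CompleteSpace 𝕜] {l : 𝕜} (hl : ‖l‖ < 1)
    {v : ℤ → 𝕜} (hv : ExpDecay v) : ∃ y, ExpDecay y ∧ ∀ n, y (n + 1) - l * y n = v n := by
  obtain ⟨C, r, hC, hr0, hr1, hv⟩ := hv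
  obtain ⟨ρ, hρ0, hρ1, hkey⟩ := exists_pow_mul_pow_natAbs_le (norm_nonneg l) hl hr0 hr1
  have hterm (n : ℤ) (j : ℕ) :
      ‖l ^ j * v (n - 1 - j)‖ ≤ C * (ρ ^ n.natAbs / ρ) * ρ ^ j := by
    rw [norm_mul, norm_pow, mul_assoc]
    calc ‖l‖ ^ j * ‖v (n - 1 - j)‖ ≤ ‖l‖ ^ j * (C * r ^ (n - 1 - j).natAbs) := by
          gcongr; exact hv _
      _ ≤ C * (ρ ^ n.natAbs / ρ * ρ ^ j) := by
        rw [mul_left_comm]; exact mul_le_mul_of_nonneg_left (hkey j n) hC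
  have hgeom := summable_geometric_of_lt_one hρ0.le hρ1
  have hsum (n : ℤ) : Summable fun j : ℕ => l ^ j * v (n - 1 - j) :=
    .of_norm_bounded (hgeom.mul_left _) (hterm n)
  refine ⟨fun n => ∑' j : ℕ, l ^ j * v (n - 1 - j), ⟨C / (ρ * (1 - ρ)), ρ, ?_, hρ0, hρ1,
    fun n => ?_⟩, fun n => ?_⟩
  · have : 0 < 1 - ρ := sub_pos.2 hρ1
    positivity
  · calc ‖∑' j : ℕ, l ^ j * v (n - 1 - j)‖ ≤ ∑' j : ℕ, C * (ρ ^ n.natAbs / ρ) * ρ ^ j :=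
          tsum_of_norm_bounded (hgeom.mul_left _).hasSum (hterm n)
      _ = C / (ρ * (1 - ρ)) * ρ ^ n.natAbs := by
          rw [tsum_mul_left, tsum_geometric_of_lt_one hρ0.le hρ1]
          field_simp
  · -- `y (n + 1) = v n + l * y n`: peel off the `j = 0` term of `y (n + 1)`
    have hsucc := (hsum (n + 1)).tsum_eq_zero_add
    simp only [add_sub_cancel_right, pow_zero, one_mul, Nat.cast_zero, sub_zero] at hsucc
    beta_reduce
    rw [add_sub_cancel_right, hsucc, ← tsum_mul_left]
    have hshift (j : ℕ) : l ^ (j + 1) * v (n - (j + 1 : ℕ)) = l * (l ^ j * v (n - 1 - j)) := by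
      rw [pow_succ, mul_comm _ l, mul_assoc,
        show n - ((j + 1 : ℕ) : ℤ) = n - 1 - j by push_cast; ring]
    simp only [hshift, add_sub_cancel_right]

lemma exists_expDecay_shift_sub_mul_eq [CompleteSpace 𝕜] {l : 𝕜} (hl : ‖l‖ ≠ 1) {v : ℤ → 𝕜}
    (hv : ExpDecay v) : ∃ y, ExpDecay y ∧ ∀ n, y (n + 1) - l * y n = v n := by
  rcases hl.lt_or_gt with hlt | hgt
  · exact exists_expDecay_shift_sub_mul_eq_of_norm_lt_one hlt hv
  have hl0 : l ≠ 0 := norm_pos_iff.1 (one_pos.trans hgt)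
  -- solve the time-reversed equation, whose coefficient is `l⁻¹`
  obtain ⟨z, hz, hze⟩ := exists_expDecay_shift_sub_mul_eq_of_norm_lt_one (l := l⁻¹)
    (by rw [norm_inv]; exact inv_lt_one_of_one_lt₀ hgt)
    ((hv.comp_neg.comp_add_const 1).const_smul (-l⁻¹))
  refine ⟨fun n => z (-n), hz.comp_neg, fun n => ?_⟩
  have h := hze (-n - 1)
  rw [sub_add_cancel, Pi.smul_apply, smul_eq_mul, show -(-n - 1 + 1) = n by ring] at h
  beta_reduce
  rw [show -(n + 1) = -n - 1 by ring]
  linear_combination (-l) * h - (z (-n - 1) - v n) * mul_inv_cancel₀ hl0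

lemma eq_zero_of_bounded_of_aeval_seqShift_prod_eq_zero {s : Multiset 𝕜} (hs : ∀ z ∈ s, ‖z‖ ≠ 1)
    {h : ℤ → 𝕜} (hb : ∃ B, ∀ n, ‖h n‖ ≤ B)
    (hz : aeval seqShift (s.map fun z => X - C z).prod h = 0) : h = 0 := by
  induction s using Multiset.induction_on generalizing h with
  | empty => simpa using hz
  | cons z s ih =>
    rw [Multiset.map_cons, Multiset.prod_cons, mul_comm, map_mul, Module.End.mul_apply] at hz
    have hfactor : aeval seqShift (X - C z) h = 0 :=
      ih (fun y hy => hs y (Multiset.mem_cons_of_mem hy)) (bounded_aeval_seqShift _ hb) hz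
    refine eq_zero_of_bounded_of_shift_eq_mul (hs z (Multiset.mem_cons_self _ _)) hb fun n => ?_
    rw [← sub_eq_zero, ← aeval_seqShift_X_sub_C_apply, hfactor, Pi.zero_apply]

lemma exists_expDecay_aeval_seqShift_prod_eq [CompleteSpace 𝕜] {s : Multiset 𝕜}
    (hs : ∀ z ∈ s, ‖z‖ ≠ 1) {v : ℤ → 𝕜} (hv : ExpDecay v) :
    ∃ w, ExpDecay w ∧ aeval seqShift (s.map fun z => X - C z).prod w = v := by
  induction s using Multiset.induction_on generalizing v with
  | empty => exact ⟨v, hv, by simp⟩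
  | cons z s ih =>
    obtain ⟨y, hy, hye⟩ := exists_expDecay_shift_sub_mul_eq (hs z (Multiset.mem_cons_self _ _)) hv
    obtain ⟨w, hw, hwe⟩ := ih (fun y hy => hs y (Multiset.mem_cons_of_mem hy)) hy
    refine ⟨w, hw, ?_⟩
    rw [Multiset.map_cons, Multiset.prod_cons, map_mul, Module.End.mul_apply, hwe]
    exact funext fun n => (aeval_seqShift_X_sub_C_apply z y n).trans (hye n)

variable [IsAlgClosed 𝕜]

lemma aeval_seqShift_eq_smul_prod (p : 𝕜[X]) :
    aeval (seqShift (𝕜 := 𝕜)) p =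
      p.leadingCoeff • aeval seqShift (p.roots.map fun z => X - C z).prod := by
  conv_lhs =>
    rw [← C_leadingCoeff_mul_prod_multiset_X_sub_C (IsAlgClosed.card_roots_eq_natDegree (p := p))]
  rw [map_mul, aeval_C, Algebra.smul_def]

lemma eq_zero_of_bounded_of_aeval_seqShift_eq_zero {p : 𝕜[X]} (hp : p ≠ 0)
    (hroots : ∀ z ∈ p.roots, ‖z‖ ≠ 1) {h : ℤ → 𝕜} (hb : ∃ B, ∀ n, ‖h n‖ ≤ B)
    (hz : aeval seqShift p h = 0) : h = 0 := by
  rw [aeval_seqShift_eq_smul_prod, LinearMap.smul_apply, smul_eq_zero] at hz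
  exact eq_zero_of_bounded_of_aeval_seqShift_prod_eq_zero hroots hb
    (hz.resolve_left (leadingCoeff_ne_zero.2 hp))

lemma exists_expDecay_aeval_seqShift_eq [CompleteSpace 𝕜] {p : 𝕜[X]} (hp : p ≠ 0)
    (hroots : ∀ z ∈ p.roots, ‖z‖ ≠ 1) {v : ℤ → 𝕜} (hv : ExpDecay v) :
    ∃ w, ExpDecay w ∧ aeval seqShift p w = v := by
  obtain ⟨w, hw, hwe⟩ := exists_expDecay_aeval_seqShift_prod_eq hroots hv
  refine ⟨p.leadingCoeff⁻¹ • w, hw.const_smul _, ?_⟩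
  rw [aeval_seqShift_eq_smul_prod, LinearMap.smul_apply, map_smul, hwe,
    smul_inv_smul₀ (leadingCoeff_ne_zero.2 hp)]

lemma ExpDecay.of_aeval_seqShift [CompleteSpace 𝕜] {p : 𝕜[X]} (hp : p ≠ 0)
    (hroots : ∀ z ∈ p.roots, ‖z‖ ≠ 1) {w : ℤ → 𝕜} (hb : ∃ B, ∀ n, ‖w n‖ ≤ B)
    (hv : ExpDecay (aeval seqShift p w)) : ExpDecay w := by
  obtain ⟨u, hu, hue⟩ := exists_expDecay_aeval_seqShift_eq hp hroots hv
  obtain ⟨B, hB⟩ := hb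
  obtain ⟨B', hB'⟩ := hu.bounded
  have hwu : w - u = 0 := by
    refine eq_zero_of_bounded_of_aeval_seqShift_eq_zero hp hroots ⟨B + B', fun n => ?_⟩ ?_
    · exact (norm_sub_le _ _).trans (add_le_add (hB n) (hB' n))
    · rw [map_sub, hue, sub_self]
  rwa [sub_eq_zero.1 hwu]

end SeqShift

lemma fsR_sub (f : ℤ[X]) (w₁ w₂ : ℤ → ℝ) : fsR f (w₁ - w₂) = fsR f w₁ - fsR f w₂ := by
  funext n
  simp only [fsR, Pi.sub_apply, mul_sub, Finset.sum_sub_distrib]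

lemma ofReal_fsR (f : ℤ[X]) (w : ℤ → ℝ) (n : ℤ) :
    ((fsR f w n : ℝ) : ℂ) = aeval seqShift (f.map (algebraMap ℤ ℂ)) (fun m => (w m : ℂ)) n := by
  rw [aeval_seqShift_apply, natDegree_map_eq_of_injective (RingHom.injective_int _), fsR]
  push_cast
  simp [coeff_map]

lemma norm_ne_one_of_mem_roots_map {f : ℤ[X]} (hf : f ≠ 0)
    (hhyp : ∀ θ : ℂ, aeval θ f = 0 → ‖θ‖ ≠ 1) : ∀ z ∈ (f.map (algebraMap ℤ ℂ)).roots, ‖z‖ ≠ 1 :=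
  fun z hz => hhyp z ((mem_roots_map_of_injective (RingHom.injective_int _) hf).1 hz)

lemma fsR_injOn_bdd {f : ℤ[X]} (hf : f ≠ 0) (hhyp : ∀ θ : ℂ, aeval θ f = 0 → ‖θ‖ ≠ 1) :
    Set.InjOn (fsR f) {w | Bdd w} := by
  rintro w₁ ⟨B₁, hB₁⟩ w₂ ⟨B₂, hB₂⟩ heq
  have hzero : (fun n => ((w₁ - w₂) n : ℂ)) = 0 := by
    refine eq_zero_of_bounded_of_aeval_seqShift_eq_zero
      ((Polynomial.map_ne_zero_iff (RingHom.injective_int _)).2 hf)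
      (norm_ne_one_of_mem_roots_map hf hhyp) ⟨B₁ + B₂, fun n => ?_⟩ (funext fun n => ?_)
    · rw [Complex.norm_real, Real.norm_eq_abs]
      exact (abs_sub _ _).trans (add_le_add (hB₁ n) (hB₂ n))
    · rw [← ofReal_fsR, fsR_sub, heq, sub_self, Pi.zero_apply, Complex.ofReal_zero, Pi.zero_apply]
  funext n
  simpa [sub_eq_zero] using congrFun hzero n

lemma IsWdelta.ne_zero {f : ℤ[X]} {wd : ℤ → ℝ} (hwd : IsWdelta f wd) : f ≠ 0 := by
  rintro rfl
  simpa [fsR, vDelta] using congrFun hwd.2.1 0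

lemma expDecay_vDelta : ExpDecay vDelta := by
  refine ⟨1, 1 / 2, zero_le_one, by norm_num, by norm_num, fun n => ?_⟩
  by_cases hn : n = 0 <;> simp [vDelta, hn]

lemma IsWdelta.expDecay {f : ℤ[X]} (hhyp : ∀ θ : ℂ, aeval θ f = 0 → ‖θ‖ ≠ 1) {wd : ℤ → ℝ}
    (hwd : IsWdelta f wd) : ExpDecay wd := by
  have hf := hwd.ne_zero
  obtain ⟨B, hB⟩ := hwd.1
  have hsolve : aeval seqShift (f.map (algebraMap ℤ ℂ)) (fun n => (wd n : ℂ)) =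
      fun n => (vDelta n : ℂ) := funext fun n => by rw [← ofReal_fsR, hwd.2.1]
  rw [← expDecay_ofReal_iff]
  refine ExpDecay.of_aeval_seqShift ((Polynomial.map_ne_zero_iff (RingHom.injective_int _)).2 hf)
    (norm_ne_one_of_mem_roots_map hf hhyp) ⟨B, fun n => by simpa using hB n⟩ ?_
  rw [hsolve, expDecay_ofReal_iff]
  exact expDecay_vDelta

section Convolution

variable {wd : ℤ → ℝ} {v : ℤ → ℤ} {N : ℤ}

lemma abs_intCast_mul_le {a : ℤ} (ha : |a| ≤ N) (x : ℝ) : |(a : ℝ) * x| ≤ N * |x| := by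
  rw [abs_mul, ← Int.cast_abs]
  exact mul_le_mul_of_nonneg_right (by exact_mod_cast ha) (abs_nonneg _)

lemma summable_abs_mul_sub (hwd : Summable fun n => |wd n|) (hv : ∀ n, |v n| ≤ N) (k : ℤ) :
    Summable fun n => |(v n : ℝ) * wd (k - n)| := by
  have hshift : Summable fun n => |wd (k - n)| := (Equiv.subLeft k).summable_iff.2 hwd
  exact (hshift.mul_left (N : ℝ)).of_nonneg_of_le (fun n => abs_nonneg _)
    fun n => abs_intCast_mul_le (hv n) _

lemma bdd_xiBar (hwd : Summable fun n => |wd n|) (hv : ∀ n, |v n| ≤ N) : Bdd (xiBar wd v) := by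
  refine ⟨(N : ℝ) * ∑' n, |wd n|, fun k => ?_⟩
  have hshift : Summable fun n => |wd (k - n)| := (Equiv.subLeft k).summable_iff.2 hwd
  have hsum := summable_abs_mul_sub hwd hv k
  calc |xiBar wd v k| ≤ ∑' n, |(v n : ℝ) * wd (k - n)| := by
        simp only [xiBar, ← Real.norm_eq_abs] at hsum ⊢
        exact norm_tsum_le_tsum_norm hsum
    _ ≤ ∑' n, (N : ℝ) * |wd (k - n)| := by
        exact hsum.tsum_le_tsum (fun n => abs_intCast_mul_le (hv n) _) (hshift.mul_left _)
    _ = (N : ℝ) * ∑' n, |wd n| := by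
        rw [tsum_mul_left]
        exact congrArg _ ((Equiv.subLeft k).tsum_eq fun n => |wd n|)

lemma fsR_xiBar {f : ℤ[X]} (hwd : Summable fun n => |wd n|) (hv : ∀ n, |v n| ≤ N)
    (hf : fsR f wd = vDelta) : fsR f (xiBar wd v) = fun n => (v n : ℝ) := by
  funext n
  have hsum (k : ℕ) : Summable fun j => (f.coeff k : ℝ) * ((v j : ℝ) * wd (n + k - j)) :=
    (summable_abs_mul_sub hwd hv (n + k)).of_abs.mul_left _
  have hcoeff (j : ℤ) : ∑ k ∈ Finset.range (f.natDegree + 1),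
      (f.coeff k : ℝ) * ((v j : ℝ) * wd (n + k - j)) = v j * vDelta (n - j) := by
    rw [← hf, fsR, Finset.mul_sum]
    exact Finset.sum_congr rfl fun k _ => by rw [sub_add_eq_add_sub]; ring
  calc fsR f (xiBar wd v) n
      = ∑ k ∈ Finset.range (f.natDegree + 1), ∑' j, (f.coeff k : ℝ) * (v j * wd (n + k - j)) := by
        simp only [fsR, xiBar, tsum_mul_left]
    _ = ∑' j, (v j : ℝ) * vDelta (n - j) := by
        rw [← Summable.tsum_finsetSum fun k _ => hsum k]
        exact tsum_congr hcoeff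
    _ = v n := by
        rw [tsum_eq_single n fun j hj => by simp [vDelta, sub_eq_zero, Ne.symm hj]]
        simp [vDelta]

end Convolution

lemma fsT_rhoT (f : ℤ[X]) (w : ℤ → ℝ) : fsT f (rhoT w) = fun n => ((fsR f w n : ℝ) : Torus) := by
  funext n
  simp only [fsT, fsR, rhoT, ← AddCircle.coe_zsmul, zsmul_eq_mul]
  exact (map_sum (QuotientAddGroup.mk' (AddSubgroup.zmultiples (1 : ℝ))) _ _).symm

lemma rhoT_mem_Xf_iff (f : ℤ[X]) (w : ℤ → ℝ) :
    rhoT w ∈ Xf f ↔ ∀ n, ∃ k : ℤ, (k : ℝ) = fsR f w n := by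
  show (∀ n, fsT f (rhoT w) n = 0) ↔ _
  simp only [fsT_rhoT, AddCircle.coe_eq_zero_iff, zsmul_eq_mul, mul_one]

lemma abs_fsR_le_norm1 (f : ℤ[X]) {w : ℤ → ℝ} (hw : ∀ n, |w n| ≤ 1) (n : ℤ) :
    |fsR f w n| ≤ norm1 f := by
  rw [fsR, norm1, Int.cast_sum]
  refine (Finset.abs_sum_le_sum_abs _ _).trans (Finset.sum_le_sum fun k _ => ?_)
  rw [abs_mul, Int.cast_abs]
  exact mul_le_of_le_one_right (abs_nonneg _) (hw _)

lemma exists_rhoT_eq (x : ℤ → Torus) : ∃ w : ℤ → ℝ, (∀ n, w n ∈ Set.Ico 0 1) ∧ rhoT w = x := by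
  choose w hw hwx using fun n => AddCircle.eq_coe_Ico (x n)
  exact ⟨w, hw, funext hwx⟩

theorem xi_of_ball_eq_Xf_general (f : Polynomial ℤ)
    (hhyp : ∀ θ : ℂ, Polynomial.aeval θ f = 0 → ‖θ‖ ≠ 1)
    (wd : ℤ → ℝ) (hwd : IsWdelta f wd) :
    (∀ v : ℤ → ℤ, (∀ n, |v n| ≤ norm1 f) →
      (∀ k : ℤ, Summable fun n : ℤ => |(v n : ℝ) * wd (k - n)|) ∧
      rhoT (xiBar wd v) ∈ Xf f) ∧
    (∀ x ∈ Xf f, ∃ v : ℤ → ℤ, (∀ n, |v n| ≤ norm1 f) ∧ rhoT (xiBar wd v) = x) := by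
  have hsum : Summable fun n => |wd n| := (hwd.expDecay hhyp).summable_norm
  refine ⟨fun v hv => ⟨summable_abs_mul_sub hsum hv, ?_⟩, fun x hx => ?_⟩
  · rw [rhoT_mem_Xf_iff, fsR_xiBar hsum hv hwd.2.1]
    exact fun n => ⟨v n, rfl⟩
  obtain ⟨w, hw, rfl⟩ := exists_rhoT_eq x
  have hw1 (n : ℤ) : |w n| ≤ 1 := abs_le.2 ⟨by linarith [(hw n).1], (hw n).2.le⟩
  choose v hv using (rhoT_mem_Xf_iff f w).1 hx
  have hvN (n : ℤ) : |v n| ≤ norm1 f := by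
    have := abs_fsR_le_norm1 f hw1 n
    rw [← hv n, ← Int.cast_abs] at this
    exact_mod_cast this
  refine ⟨v, hvN, congrArg rhoT (fsR_injOn_bdd hwd.ne_zero hhyp (bdd_xiBar hsum hvN) ⟨1, hw1⟩ ?_)⟩
  rw [fsR_xiBar hsum hvN hwd.2.1]
  exact funext hv

/-- with `V = {v ∈ ℓ^∞(ℤ,ℤ) : ‖v‖_∞ ≤ ‖f‖₁}`, one has `ξ(V) = X_f`:
every point of `X_f` equals `∑_n v_n α_f^{-n}(x^Δ)` for some `v` with `|v_n| ≤ ‖f‖₁`. -/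
theorem xi_of_ball_eq_Xf (f : Polynomial ℤ) (hm : 1 ≤ f.natDegree)
    (hlead : 0 < f.leadingCoeff) (h0 : f.coeff 0 ≠ 0)
    (hirr : Irreducible (Polynomial.toLaurent f)) (hnc : Noncyclotomic f)
    (hhyp : ∀ θ : ℂ, Polynomial.aeval θ f = 0 → ‖θ‖ ≠ 1)
    (wd : ℤ → ℝ) (hwd : IsWdelta f wd) :
    (∀ v : ℤ → ℤ, (∀ n, |v n| ≤ norm1 f) →
      (∀ k : ℤ, Summable fun n : ℤ => |(v n : ℝ) * wd (k - n)|) ∧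
      rhoT (xiBar wd v) ∈ Xf f) ∧
    (∀ x ∈ Xf f, ∃ v : ℤ → ℤ, (∀ n, |v n| ≤ norm1 f) ∧ rhoT (xiBar wd v) = x) :=
  xi_of_ball_eq_Xf_general f hhyp wd hwd
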